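/- arXiv:0909.5447 — 3 statements merged into one kernel-verified Lean document; each statement's English description precedes it below -/
import Mathlib

section
/- For every finite set E, the comma category E/Ω_n^epi is a preorder: between any two objects there is at most one morphism. Consequently, a morphism u : τ → σ of Ω_n^epi is uniquely determined by its source τ, its target σ, and its level-0 component u_0 : T_0 → S_0. -/
open CategoryTheory

/-- An object of the category `Ω_n^epi` of pruned `n`-level trees: a sequence of
monotone surjections `T_0 → T_1 → ⋯ → T_n` between the finite ordered sets
`T_i = Fin (t i)`, with `T_n` (and all higher levels) a one-point set. -/
structure PTree (n : ℕ) where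
  t : ℕ → ℕ
  map : ∀ i : ℕ, Fin (t i) → Fin (t (i+1))
  mono : ∀ i, Monotone (map i)
  surjmap : ∀ i, Function.Surjective (map i)
  top : ∀ i, n ≤ i → t i = 1

/-- A morphism of pruned trees: a family of surjections commuting with the
structure maps, order-preserving on every fiber of the structure maps. -/
structure PTreeHom {n : ℕ} (τ σ : PTree n) where
  app : ∀ i, Fin (τ.t i) → Fin (σ.t i)
  surj : ∀ i, Function.Surjective (app i)
  comm : ∀ i x, app (i+1) (τ.map i x) = σ.map i (app i x)
  fiberMono : ∀ i x y, τ.map i x = τ.map i y → x ≤ y → app i x ≤ app i y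

theorem PTreeHom.ext' {n : ℕ} {τ σ : PTree n} {f g : PTreeHom τ σ}
    (h : f.app = g.app) : f = g := by
  cases f; cases g; cases h; rfl

instance (n : ℕ) : Category (PTree n) where
  Hom := PTreeHom
  id τ := ⟨fun _ => _root_.id, fun _ => Function.surjective_id, fun _ _ => rfl,
    fun _ _ _ _ h => h⟩
  comp f g :=
    ⟨fun i => g.app i ∘ f.app i,
     fun i => (g.surj i).comp (f.surj i),
     fun i x => by simp only [Function.comp_apply, f.comm, g.comm],
     fun i x y hxy hle =>
       g.fiberMono i _ _ (by rw [← f.comm, ← f.comm, hxy]) (f.fiberMono i x y hxy hle)⟩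
  id_comp _ := PTreeHom.ext' rfl
  comp_id _ := PTreeHom.ext' rfl
  assoc _ _ _ := PTreeHom.ext' rfl

/-- The degree of a pruned tree: the number of vertices of levels `0,…,n-1`. -/
def PTree.deg {n : ℕ} (τ : PTree n) : ℕ := ∑ i ∈ Finset.range n, τ.t i

/-- The degree of a morphism `u : τ ⟶ σ`: `deg τ - deg σ`. -/
def homDeg {n : ℕ} {τ σ : PTree n} (_ : τ ⟶ σ) : ℤ :=
  (τ.deg : ℤ) - (σ.deg : ℤ)

/-- A morphism (with possibly different source and target) is an identity. -/
def IsIdentityHom {n : ℕ} {τ σ : PTree n} (u : τ ⟶ σ) : Prop :=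
  ∃ h : τ = σ, u = eqToHom h

/-- For every finite set `E`, the comma category `E/Ω_n^epi` is a
preorder: between any two objects `(τ, τ₀)`, `(σ, σ₀)` there is at most one
morphism.  Consequently a morphism `u : τ ⟶ σ` of `Ω_n^epi` is uniquely
determined by its source, its target, and its level-0 component. -/
theorem stmt_0 (n : ℕ) (hn : 1 ≤ n) :
    (∀ (E : Type) (_ : Fintype E) (τ σ : PTree n)
       (τ0 : E → Fin (τ.t 0)) (σ0 : E → Fin (σ.t 0)),
       Function.Surjective τ0 → Function.Surjective σ0 →
       ∀ u v : τ ⟶ σ,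
         PTreeHom.app u 0 ∘ τ0 = σ0 → PTreeHom.app v 0 ∘ τ0 = σ0 → u = v) ∧
    (∀ (τ σ : PTree n) (u v : τ ⟶ σ),
       PTreeHom.app u 0 = PTreeHom.app v 0 → u = v) := by
  have key : ∀ (τ σ : PTree n) (u v : τ ⟶ σ),
      PTreeHom.app u 0 = PTreeHom.app v 0 → u = v := by
    intro τ σ u v h0
    apply PTreeHom.ext'
    funext i
    induction i with
    | zero => exact h0
    | succ i ih =>
      funext x
      obtain ⟨y, rfl⟩ := τ.surjmap i x
      rw [u.comm, v.comm, ih]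
  refine ⟨?_, key⟩
  intro E _ τ σ τ0 σ0 hτ0 _ u v hu hv
  apply key
  funext x
  obtain ⟨e, rfl⟩ := hτ0 x
  exact (congrFun hu e).trans (congrFun hv e).symm
end

section
/- For every object τ of Ω_n^epi, the set of degree-1 morphisms with source τ is in bijection with the set of data consisting of: a level k ∈ {0,…,n−1}, a vertex b ∈ T_{k+1}, a pair of consecutive elements (a, a+1) in the fiber τ_{k+1}^{−1}(b), and, when k > 0, a shuffle of the fibers τ_k^{−1}(a) and τ_k^{−1}(a+1), i.e. a bijection from τ_k^{−1}(a) ⊔ τ_k^{−1}(a+1) to an ordered set of the same cardinality which preserves the order among the elements of τ_k^{−1}(a) and among the elements of τ_k^{−1}(a+1). The degree-1 morphism associated to such a datum merges the vertices a and a+1 at level k, shuffles the subtrees above them according to the given shuffle, and is the identity on all levels > k; its target is uniquely determined by this datum. -/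
open CategoryTheory

/-- The combinatorial data of a degree-1 morphism with source `τ`: a level
`k < n`, a pair of consecutive vertices `(a, a+1)` lying in the same fiber of
`τ_{k+1} : T_k → T_{k+1}`, and, when `k > 0` (i.e. for the level `j` with
`j + 1 = k`), a shuffle of the fibers `τ_k⁻¹(a)` and `τ_k⁻¹(a+1)`: a bijection
from the disjoint union of the two fibers onto an ordered set of the same
cardinality, preserving the order among the elements of each fiber. -/
structure MergeData {n : ℕ} (τ : PTree n) where
  k : ℕ
  hk : k < n
  a : ℕ
  ha : a + 1 < τ.t k
  hfib : τ.map k ⟨a, Nat.lt_of_succ_lt ha⟩ = τ.map k ⟨a + 1, ha⟩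
  sh : ∀ j, j + 1 = k →
    ({x : Fin (τ.t j) // (τ.map j x : ℕ) = a ∨ (τ.map j x : ℕ) = a + 1} →
      Fin (Fintype.card
        {x : Fin (τ.t j) // (τ.map j x : ℕ) = a ∨ (τ.map j x : ℕ) = a + 1}))
  shBij : ∀ j h, Function.Bijective (sh j h)
  shOrd : ∀ j h x y, τ.map j x.val = τ.map j y.val → x.val ≤ y.val →
    sh j h x ≤ sh j h y

/-!
A degree-one morphism `u : τ ⟶ σ` is surjective on every level and removes exactly one vertex,
at some level `k`; every other `u_i` is a bijection. Going down from the root, a bijective level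
lying under an identity level is monotone, hence itself the identity; so `u` is the identity
above `k`, and `u_k` is a monotone surjection onto a chain with one element fewer, i.e. a
degeneracy map of the simplex category, identifying some `a` and `a + 1`, which must then have
the same parent. Below `k` each `u_i` is a bijection, and the axioms force it to order `T_i`
lexicographically by (image of the parent, position among the siblings), except on the two
fibers over `a, a + 1`: these become a single fiber, and their interleaving is an arbitrary
shuffle. Conversely these recipes, run downwards from level `k`, define a degree-one morphism
for every datum `(k, a, shuffle)`, and a morphism is determined by its levels.
-/

open Finset

def merge (a x : ℕ) : ℕ := if x ≤ a then x else x - 1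

theorem merge_monotone (a : ℕ) : Monotone (merge a) := by
  intro x y h
  unfold merge
  split_ifs <;> omega

theorem merge_eq_merge_iff {a x y : ℕ} :
    merge a x = merge a y ↔ x = y ∨ ((x = a ∨ x = a + 1) ∧ (y = a ∨ y = a + 1)) := by
  unfold merge
  split_ifs <;> omega

theorem merge_eq_self_of_mem {a x : ℕ} (hx : x = a ∨ x = a + 1) : merge a x = a := by
  unfold merge
  split_ifs <;> omega

theorem eq_of_merge_le_merge {a x y : ℕ} (h : merge a x ≤ merge a y) (hyx : y < x) :
    x = a + 1 ∧ y = a := by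
  unfold merge at h
  split_ifs at h <;> omega

theorem val_predAbove_eq_merge {m : ℕ} (i : Fin (m + 1)) (x : Fin (m + 2)) :
    (i.predAbove x : ℕ) = merge i x := by
  unfold merge
  by_cases h : (x : ℕ) ≤ i
  · rw [Fin.predAbove_of_le_castSucc i x (Fin.le_def.mpr h), if_pos h, Fin.coe_castPred]
  · rw [Fin.predAbove_of_castSucc_lt i x (Fin.lt_def.mpr (by simp; omega)), if_neg h,
      Fin.val_pred]

theorem exists_merge_of_monotone_surjective {p m : ℕ} (g : Fin p → Fin m) (hmono : Monotone g)
    (hsurj : Function.Surjective g) (hpm : m + 1 = p) :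
    ∃ a, a + 1 < p ∧ ∀ x, (g x : ℕ) = merge a x := by
  subst hpm
  obtain _ | m := m
  · exact (g 0).elim0
  let θ : SimplexCategory.mk (m + 1) ⟶ SimplexCategory.mk m := SimplexCategory.mkHom ⟨g, hmono⟩
  have : Epi θ := SimplexCategory.epi_iff_surjective (f := θ) |>.mpr hsurj
  obtain ⟨i, hi⟩ := SimplexCategory.eq_σ_of_epi θ
  refine ⟨i, by omega, fun x => ?_⟩
  have hx : g x = i.predAbove x := congrArg (fun f => f.toOrderHom x) hi
  rw [hx, val_predAbove_eq_merge]

theorem le_iff_le_of_le_imp_le {X α β : Type*} [LinearOrder α] [LinearOrder β] {f : X → β}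
    {key : X → α} (hkey : Function.Injective key) (h : ∀ x y, f x ≤ f y → key x ≤ key y)
    (x y : X) : f x ≤ f y ↔ key x ≤ key y := by
  refine ⟨h x y, fun hxy => le_of_not_gt fun hlt => hlt.ne' ?_⟩
  exact congrArg f (hkey (le_antisymm hxy (h y x hlt.le)))

section Rank

variable {X α : Type*} [Fintype X] [LinearOrder α]

def rank (key : X → α) (x : X) : ℕ := #{y | key y < key x}

theorem rank_le_rank_iff (key : X → α) (x y : X) :
    rank key x ≤ rank key y ↔ key x ≤ key y := by
  refine ⟨fun h => le_of_not_gt fun hlt => h.not_gt ?_, fun h => card_le_card fun z hz => ?_⟩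
  · refine card_lt_card ⟨fun z hz => ?_, fun hsub => ?_⟩
    · simp only [mem_filter, mem_univ, true_and] at hz ⊢
      exact hz.trans hlt
    · simpa using hsub (mem_filter.mpr ⟨mem_univ y, hlt⟩)
  · simp only [mem_filter, mem_univ, true_and] at hz ⊢
    exact hz.trans_le h

theorem rank_lt_card (key : X → α) (x : X) : rank key x < Fintype.card X :=
  card_lt_univ_of_notMem (x := x) (by simp)

theorem rank_injective {key : X → α} (hkey : Function.Injective key) :
    Function.Injective (rank key) := fun x y h =>
  hkey (le_antisymm ((rank_le_rank_iff key x y).mp h.le) ((rank_le_rank_iff key y x).mp h.ge))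

theorem exists_rank_eq {key : X → α} (hkey : Function.Injective key) {r : ℕ}
    (hr : r < Fintype.card X) : ∃ x, rank key x = r := by
  have hbij : Function.Bijective
      (fun x => (⟨rank key x, rank_lt_card key x⟩ : Fin (Fintype.card X))) :=
    (Fintype.bijective_iff_injective_and_card _).mpr
      ⟨fun x y h => rank_injective hkey (Fin.ext_iff.mp h), by simp⟩
  obtain ⟨x, hx⟩ := hbij.surjective ⟨r, hr⟩
  exact ⟨x, Fin.ext_iff.mp hx⟩

theorem val_eq_rank {m : ℕ} {f : X → Fin m} (hf : Function.Bijective f) {key : X → α}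
    (hkey : ∀ x y, f x ≤ f y ↔ key x ≤ key y) (x : X) : (f x : ℕ) = rank key x := by
  have : ({y | key y < key x} : Finset X).map ⟨f, hf.injective⟩ = Iio (f x) := by
    ext z
    obtain ⟨y, rfl⟩ := hf.surjective z
    simp [← not_le, hkey]
  rw [rank, ← card_map ⟨f, hf.injective⟩, this, Fin.card_Iio]

end Rank

theorem Fin.val_eq_of_monotone_bijective {p q : ℕ} {f : Fin p → Fin q} (hmono : Monotone f)
    (hf : Function.Bijective f) (x : Fin p) : (f x : ℕ) = x := by
  have hsm := hmono.strictMono_of_injective hf.injective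
  rw [val_eq_rank hf (key := id) (fun _ _ => hsm.le_iff_le) x,
    ← val_eq_rank Function.bijective_id (key := id) (fun _ _ => Iff.rfl) x, id]

section Trees

variable {n : ℕ} {τ σ : PTree n}

abbrev DegreeOneHom (τ : PTree n) := Σ σ : PTree n, {u : τ ⟶ σ // homDeg u = 1}

theorem PTree.ext_of_val {σ σ' : PTree n} (ht : σ.t = σ'.t)
    (hmap : ∀ i (y : Fin (σ.t i)) (y' : Fin (σ'.t i)), (y : ℕ) = y' →
      (σ.map i y : ℕ) = σ'.map i y') : σ = σ' := by
  obtain ⟨t, map, _, _, _⟩ := σ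
  obtain ⟨t', map', _, _, _⟩ := σ'
  subst ht
  obtain rfl : map = map' := funext fun i => funext fun y => Fin.ext (hmap i y y rfl)
  rfl

theorem PTree.exists_hom_of_val (τ : PTree n) (s : ℕ → ℕ) (hs : ∀ i, n ≤ i → s i = 1)
    (v : ∀ l, Fin (τ.t l) → ℕ) (hlt : ∀ l x, v l x < s l)
    (hsurj : ∀ l r, r < s l → ∃ x, v l x = r)
    (hdesc : ∀ l x y, v l x ≤ v l y → v (l + 1) (τ.map l x) ≤ v (l + 1) (τ.map l y))
    (hfib : ∀ l x y, τ.map l x = τ.map l y → x ≤ y → v l x ≤ v l y) :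
    ∃ (σ : PTree n) (u : τ ⟶ σ), σ.t = s ∧ ∀ l x, (u.app l x : ℕ) = v l x := by
  choose pre hpre using hsurj
  have hwd : ∀ l x y, v l x = v l y → v (l + 1) (τ.map l x) = v (l + 1) (τ.map l y) :=
    fun l x y h => le_antisymm (hdesc l x y h.le) (hdesc l y x h.ge)
  let σ : PTree n :=
    { t := s
      map := fun l y => ⟨v (l + 1) (τ.map l (pre l y y.isLt)), hlt _ _⟩
      mono := fun l y y' hyy' => hdesc l _ _ (by rw [hpre, hpre]; exact hyy')
      surjmap := fun l r => by
        obtain ⟨x, hx⟩ := τ.surjmap l (pre (l + 1) r r.isLt)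
        refine ⟨⟨v l x, hlt l x⟩, Fin.ext ?_⟩
        simp only
        rw [hwd l _ x (hpre _ _ _), hx, hpre]
      top := hs }
  refine ⟨σ, ⟨fun l x => ⟨v l x, hlt l x⟩, fun l r => ?_, fun l x => ?_, hfib⟩, rfl,
    fun _ _ => rfl⟩
  · exact ⟨pre l r r.isLt, Fin.ext (hpre _ _ _)⟩
  · exact Fin.ext (hwd l _ _ (hpre _ _ _).symm)

namespace PTreeHom

theorem t_le (u : τ ⟶ σ) (i : ℕ) : σ.t i ≤ τ.t i := by
  simpa using Fintype.card_le_of_surjective _ (u.surj i)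

theorem t_le_of_app_val_eq {σ' : PTree n} (u : τ ⟶ σ) (u' : τ ⟶ σ')
    (h : ∀ l x, (u.app l x : ℕ) = u'.app l x) (l : ℕ) : σ.t l ≤ σ'.t l := by
  obtain h0 | hpos := Nat.eq_zero_or_pos (σ.t l)
  · omega
  obtain ⟨x, hx⟩ := u.surj l ⟨σ.t l - 1, by omega⟩
  have := (u'.app l x).isLt
  rw [← h, hx] at this
  simp only at this
  omega

theorem bijective_app (u : τ ⟶ σ) {l : ℕ} (h : σ.t l = τ.t l) :
    Function.Bijective (u.app l) :=
  (Fintype.bijective_iff_surjective_and_card _).mpr ⟨u.surj l, by simp [h]⟩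

theorem monotone_app (u : τ ⟶ σ) {l : ℕ}
    (h : ∀ z : Fin (τ.t (l + 1)), (u.app (l + 1) z : ℕ) = z) : Monotone (u.app l) := by
  intro x y hxy
  by_cases hfib : τ.map l x = τ.map l y
  · exact u.fiberMono l x y hfib hxy
  · have hlt : τ.map l x < τ.map l y := lt_of_le_of_ne (τ.mono l hxy) hfib
    by_contra hyx
    have := σ.mono l (le_of_not_ge hyx)
    rw [← u.comm, ← u.comm, Fin.le_def, h, h] at this
    exact absurd hlt (not_lt.mpr this)

theorem map_eq_of_app_eq (u : τ ⟶ σ) {l : ℕ}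
    (h : ∀ z : Fin (τ.t (l + 1)), (u.app (l + 1) z : ℕ) = z) {x y : Fin (τ.t l)}
    (hxy : u.app l x = u.app l y) : τ.map l x = τ.map l y := by
  apply Fin.ext
  rw [← h, ← h, u.comm, u.comm, hxy]

theorem app_val_eq_of_lt (u : τ ⟶ σ) {k : ℕ} (hk : ∀ i, k < i → σ.t i = τ.t i) (l : ℕ)
    (hl : k < l) (x : Fin (τ.t l)) : (u.app l x : ℕ) = x := by
  by_cases hln : n ≤ l
  · have := σ.top l hln
    have := τ.top l hln
    have := (u.app l x).isLt
    omega
  · exact Fin.val_eq_of_monotone_bijective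
      (u.monotone_app fun z => app_val_eq_of_lt u hk (l + 1) (by omega) z)
      (u.bijective_app (hk l hl)) x
termination_by n - l

end PTreeHom

theorem DegreeOneHom.ext {p q : DegreeOneHom τ}
    (h : ∀ l x, (p.2.1.app l x : ℕ) = q.2.1.app l x) : p = q := by
  obtain ⟨σ, u, hu⟩ := p
  obtain ⟨σ', u', hu'⟩ := q
  obtain rfl : σ = σ' := by
    refine PTree.ext_of_val (funext fun l => le_antisymm (u.t_le_of_app_val_eq u' h l)
      (u'.t_le_of_app_val_eq u (fun l x => (h l x).symm) l)) fun i y y' hyy' => ?_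
    obtain ⟨x, rfl⟩ := u.surj i y
    obtain rfl : u'.app i x = y' := Fin.ext ((h i x).symm.trans hyy')
    rw [← u.comm, ← u'.comm]
    exact h _ _
  obtain rfl : u = u' := PTreeHom.ext' (funext fun l => funext fun x => Fin.ext (h l x))
  rfl

theorem exists_level_of_homDeg_eq_one (u : τ ⟶ σ) (hu : homDeg u = 1) :
    ∃ k < n, σ.t k + 1 = τ.t k ∧ ∀ i ≠ k, σ.t i = τ.t i := by
  have hdiff : ∑ i ∈ range n, (τ.t i - σ.t i) = 1 := by
    have hsplit := sum_tsub_distrib (range n) (fun i _ => u.t_le i)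
    unfold homDeg PTree.deg at hu
    have := sum_le_sum fun i (_ : i ∈ range n) => u.t_le i
    omega
  obtain ⟨k, hk, hne⟩ := exists_ne_zero_of_sum_ne_zero (hdiff ▸ one_ne_zero)
  rw [← add_sum_erase _ _ hk] at hdiff
  have hrest : ∀ i ∈ (range n).erase k, τ.t i - σ.t i = 0 := sum_eq_zero_iff.mp (by omega)
  refine ⟨k, mem_range.mp hk, by have := u.t_le k; omega, fun i hi => ?_⟩
  by_cases hin : i < n
  · have := hrest i (mem_erase.mpr ⟨hi, mem_range.mpr hin⟩)
    have := u.t_le i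
    omega
  · rw [σ.top i (by omega), τ.top i (by omega)]

end Trees

namespace MergeData

variable {n : ℕ} {τ : PTree n} (d : MergeData τ)

def t (i : ℕ) : ℕ := if i = d.k then τ.t d.k - 1 else τ.t i

def tie (l : ℕ) (x : Fin (τ.t l)) : ℕ :=
  if hl : l + 1 = d.k then
    if hx : (τ.map l x : ℕ) = d.a ∨ (τ.map l x : ℕ) = d.a + 1 then d.sh l hl ⟨x, hx⟩ else x
  else x

/-- Valued in `ℕ` rather than in `Fin (d.t l)`, so that the downward recursion needs no casts. -/
def appVal (l : ℕ) (x : Fin (τ.t l)) : ℕ :=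
  if l < d.k then
    rank (fun y : Fin (τ.t l) => toLex (appVal (l + 1) (τ.map l y), d.tie l y)) x
  else if l = d.k then merge d.a x
  else x
termination_by d.k - l

def key (l : ℕ) (x : Fin (τ.t l)) : ℕ ×ₗ ℕ := toLex (d.appVal (l + 1) (τ.map l x), d.tie l x)

theorem appVal_of_lt {l : ℕ} (hl : l < d.k) (x : Fin (τ.t l)) :
    d.appVal l x = rank (d.key l) x := by
  rw [appVal, if_pos hl]
  rfl

theorem appVal_of_eq {l : ℕ} (hl : l = d.k) (x : Fin (τ.t l)) :
    d.appVal l x = merge d.a x := by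
  rw [appVal, if_neg (by omega), if_pos hl]

theorem appVal_of_gt {l : ℕ} (hl : d.k < l) (x : Fin (τ.t l)) : d.appVal l x = x := by
  rw [appVal, if_neg (by omega), if_neg (by omega)]

theorem tie_of_mem {l : ℕ} (hl : l + 1 = d.k) {x : Fin (τ.t l)}
    (hx : (τ.map l x : ℕ) = d.a ∨ (τ.map l x : ℕ) = d.a + 1) :
    d.tie l x = d.sh l hl ⟨x, hx⟩ := by
  rw [tie, dif_pos hl, dif_pos hx]

theorem tie_of_not_mem {l : ℕ} {x : Fin (τ.t l)}
    (hx : ¬((τ.map l x : ℕ) = d.a ∨ (τ.map l x : ℕ) = d.a + 1)) : d.tie l x = x := by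
  unfold tie
  split_ifs <;> rfl

theorem tie_of_ne {l : ℕ} (hl : l + 1 ≠ d.k) (x : Fin (τ.t l)) : d.tie l x = x := by
  rw [tie, dif_neg hl]

theorem tie_le_tie_of_map_eq {l : ℕ} {x y : Fin (τ.t l)} (hmap : τ.map l x = τ.map l y)
    (hxy : x ≤ y) : d.tie l x ≤ d.tie l y := by
  by_cases hl : l + 1 = d.k
  · by_cases hx : (τ.map l x : ℕ) = d.a ∨ (τ.map l x : ℕ) = d.a + 1
    · have hy : (τ.map l y : ℕ) = d.a ∨ (τ.map l y : ℕ) = d.a + 1 := hmap ▸ hx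
      rw [d.tie_of_mem hl hx, d.tie_of_mem hl hy]
      exact d.shOrd l hl ⟨x, hx⟩ ⟨y, hy⟩ hmap hxy
    · have hy : ¬((τ.map l y : ℕ) = d.a ∨ (τ.map l y : ℕ) = d.a + 1) := hmap ▸ hx
      rw [d.tie_of_not_mem hx, d.tie_of_not_mem hy]
      exact hxy
  · rw [d.tie_of_ne hl, d.tie_of_ne hl]
    exact hxy

theorem key_injective (l : ℕ) : Function.Injective (d.key l) := by
  intro x y h
  simp only [key, toLex_inj, Prod.mk.injEq] at h
  obtain ⟨hval, htie⟩ := h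
  by_cases hl : l + 1 = d.k
  swap
  · rw [d.tie_of_ne hl, d.tie_of_ne hl] at htie
    exact Fin.ext htie
  rw [d.appVal_of_eq hl, d.appVal_of_eq hl, merge_eq_merge_iff] at hval
  by_cases hx : (τ.map l x : ℕ) = d.a ∨ (τ.map l x : ℕ) = d.a + 1
  · have hy : (τ.map l y : ℕ) = d.a ∨ (τ.map l y : ℕ) = d.a + 1 :=
      hval.elim (fun h => h ▸ hx) And.right
    rw [d.tie_of_mem hl hx, d.tie_of_mem hl hy] at htie
    exact congrArg Subtype.val ((d.shBij l hl).injective (Fin.ext htie))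
  · have hy : ¬((τ.map l y : ℕ) = d.a ∨ (τ.map l y : ℕ) = d.a + 1) :=
      hval.elim (fun h => h ▸ hx) fun h => absurd h.1 hx
    rw [d.tie_of_not_mem hx, d.tie_of_not_mem hy] at htie
    exact Fin.ext htie

theorem appVal_injective_of_ne {l : ℕ} (hl : l ≠ d.k) : Function.Injective (d.appVal l) := by
  rcases Nat.lt_or_gt_of_ne hl with hlt | hgt
  · rw [funext (d.appVal_of_lt hlt)]
    exact rank_injective (d.key_injective l)
  · intro x y h
    rw [d.appVal_of_gt hgt, d.appVal_of_gt hgt] at h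
    exact Fin.ext h

theorem appVal_a_eq_appVal_a_add_one :
    d.appVal d.k ⟨d.a, by have := d.ha; omega⟩ = d.appVal d.k ⟨d.a + 1, d.ha⟩ := by
  rw [d.appVal_of_eq rfl, d.appVal_of_eq rfl, merge_eq_merge_iff]
  simp

theorem sh_le_sh_iff {j : ℕ} (hj : j + 1 = d.k)
    (x y : {x : Fin (τ.t j) // (τ.map j x : ℕ) = d.a ∨ (τ.map j x : ℕ) = d.a + 1}) :
    d.sh j hj x ≤ d.sh j hj y ↔ d.appVal j x.1 ≤ d.appVal j y.1 := by
  rw [d.appVal_of_lt (by omega), d.appVal_of_lt (by omega), rank_le_rank_iff, key, key,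
    d.appVal_of_eq hj, d.appVal_of_eq hj, merge_eq_self_of_mem x.2, merge_eq_self_of_mem y.2,
    d.tie_of_mem hj x.2, d.tie_of_mem hj y.2, Prod.Lex.toLex_le_toLex]
  simp

theorem t_of_ne {i : ℕ} (hi : i ≠ d.k) : d.t i = τ.t i := if_neg hi

theorem appVal_lt (l : ℕ) (x : Fin (τ.t l)) : d.appVal l x < d.t l := by
  rcases lt_trichotomy l d.k with hl | rfl | hl
  · rw [d.appVal_of_lt hl, d.t_of_ne hl.ne]
    simpa using rank_lt_card (d.key l) x
  · rw [d.appVal_of_eq rfl, t, if_pos rfl]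
    have := d.ha
    have := x.isLt
    unfold merge
    split_ifs <;> omega
  · rw [d.appVal_of_gt hl, d.t_of_ne hl.ne']
    exact x.isLt

theorem exists_appVal_eq {l r : ℕ} (hr : r < d.t l) : ∃ x, d.appVal l x = r := by
  rcases lt_trichotomy l d.k with hl | rfl | hl
  · rw [d.t_of_ne hl.ne] at hr
    simp_rw [d.appVal_of_lt hl]
    exact exists_rank_eq (d.key_injective l) (by simpa using hr)
  · rw [t, if_pos rfl] at hr
    by_cases hra : r ≤ d.a
    · exact ⟨⟨r, by omega⟩, by rw [d.appVal_of_eq rfl, merge, if_pos hra]⟩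
    · refine ⟨⟨r + 1, by omega⟩, ?_⟩
      rw [d.appVal_of_eq rfl, merge, if_neg (by simp; omega)]
      rfl
  · rw [d.t_of_ne hl.ne'] at hr
    exact ⟨⟨r, hr⟩, d.appVal_of_gt hl _⟩

theorem appVal_succ_le_of_le {l : ℕ} {x y : Fin (τ.t l)} (h : d.appVal l x ≤ d.appVal l y) :
    d.appVal (l + 1) (τ.map l x) ≤ d.appVal (l + 1) (τ.map l y) := by
  rcases lt_trichotomy l d.k with hl | rfl | hl
  · rw [d.appVal_of_lt hl, d.appVal_of_lt hl, rank_le_rank_iff] at h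
    exact Prod.Lex.monotone_fst _ _ h
  · rw [d.appVal_of_eq rfl, d.appVal_of_eq rfl] at h
    rw [d.appVal_of_gt (by omega), d.appVal_of_gt (by omega), ← Fin.le_def]
    by_cases hxy : x ≤ y
    · exact τ.mono _ hxy
    · obtain ⟨hx, hy⟩ := eq_of_merge_le_merge h (Fin.lt_def.mp (not_le.mp hxy))
      rw [show x = ⟨d.a + 1, d.ha⟩ from Fin.ext hx, show y = ⟨d.a, by omega⟩ from Fin.ext hy,
        ← d.hfib]
  · rw [d.appVal_of_gt hl, d.appVal_of_gt hl] at h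
    rw [d.appVal_of_gt (by omega), d.appVal_of_gt (by omega)]
    exact τ.mono l h

theorem appVal_le_of_map_eq {l : ℕ} {x y : Fin (τ.t l)} (hmap : τ.map l x = τ.map l y)
    (hxy : x ≤ y) : d.appVal l x ≤ d.appVal l y := by
  rcases lt_trichotomy l d.k with hl | rfl | hl
  · rw [d.appVal_of_lt hl, d.appVal_of_lt hl, rank_le_rank_iff, key, key, hmap,
      Prod.Lex.toLex_le_toLex]
    exact Or.inr ⟨rfl, d.tie_le_tie_of_map_eq hmap hxy⟩
  · rw [d.appVal_of_eq rfl, d.appVal_of_eq rfl]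
    exact merge_monotone _ hxy
  · rw [d.appVal_of_gt hl, d.appVal_of_gt hl]
    exact hxy

theorem sum_t_add_one : ∑ i ∈ range n, d.t i + 1 = τ.deg := by
  have hk : d.k ∈ range n := mem_range.mpr d.hk
  rw [PTree.deg, ← add_sum_erase _ _ hk, ← add_sum_erase _ _ hk,
    sum_congr rfl fun i hi => d.t_of_ne (ne_of_mem_erase hi), t, if_pos rfl]
  have := d.ha
  omega

theorem exists_degreeOneHom :
    ∃ p : DegreeOneHom τ, ∀ l x, (p.2.1.app l x : ℕ) = d.appVal l x := by
  obtain ⟨σ, u, hσ, hu⟩ := τ.exists_hom_of_val d.t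
    (fun i hi => (d.t_of_ne (by have := d.hk; omega)).trans (τ.top i hi)) d.appVal d.appVal_lt
    (fun _ _ => d.exists_appVal_eq) (fun _ _ _ => d.appVal_succ_le_of_le)
    (fun _ _ _ => d.appVal_le_of_map_eq)
  refine ⟨⟨σ, u, ?_⟩, hu⟩
  rw [homDeg, ← d.sum_t_add_one, PTree.deg, hσ]
  push_cast
  ring

theorem ext_of_appVal {d d' : MergeData τ} (h : ∀ l x, d.appVal l x = d'.appVal l x) :
    d = d' := by
  have hk : d.k = d'.k := by
    by_contra hne
    have := d'.appVal_injective_of_ne hne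
      ((h _ _).symm.trans (d.appVal_a_eq_appVal_a_add_one.trans (h _ _)))
    simp at this
  have ha : d.a = d'.a := by
    have h1 := h d.k ⟨d.a + 1, d.ha⟩
    have h2 := h d.k ⟨d'.a + 1, hk ▸ d'.ha⟩
    rw [d.appVal_of_eq rfl, d'.appVal_of_eq hk] at h1 h2
    unfold merge at h1 h2
    simp only at h1 h2
    split_ifs at h1 h2 <;> omega
  have hsh := @d.sh_le_sh_iff
  have hsh' := @d'.sh_le_sh_iff
  obtain ⟨k, _, a, _, _, sh, shBij, _⟩ := d
  obtain ⟨k', _, a', _, _, sh', shBij', _⟩ := d'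
  dsimp only at hk ha hsh hsh'
  subst hk ha
  obtain rfl : sh = sh' := by
    funext j hj x
    have hle : ∀ x y, sh j hj x ≤ sh j hj y ↔ sh' j hj x ≤ sh' j hj y := fun x y => by
      rw [hsh hj, hsh' hj, h, h]
    exact Fin.ext ((val_eq_rank (shBij j hj) hle x).trans
      (val_eq_rank (shBij' j hj) (fun _ _ => Iff.rfl) x).symm)
  rfl

end MergeData

namespace PTreeHom

variable {n : ℕ} {τ σ : PTree n}

theorem key_le_key_of_app_le (u : τ ⟶ σ) (d : MergeData τ) {l : ℕ}
    (hinj : Function.Injective (u.app l))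
    (hsucc : ∀ z, (u.app (l + 1) z : ℕ) = d.appVal (l + 1) z)
    (hsh : ∀ (hl : l + 1 = d.k) x y, d.sh l hl x ≤ d.sh l hl y ↔ u.app l x.1 ≤ u.app l y.1)
    {x y : Fin (τ.t l)} (hxy : u.app l x ≤ u.app l y) : d.key l x ≤ d.key l y := by
  have hpar : d.appVal (l + 1) (τ.map l x) ≤ d.appVal (l + 1) (τ.map l y) := by
    rw [← hsucc, ← hsucc, ← Fin.le_def, u.comm, u.comm]
    exact σ.mono l hxy
  rw [MergeData.key, MergeData.key, Prod.Lex.toLex_le_toLex]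
  refine (lt_or_eq_of_le hpar).imp id fun heq => ⟨heq, ?_⟩
  dsimp only at heq ⊢
  by_cases hx : l + 1 = d.k ∧ ((τ.map l x : ℕ) = d.a ∨ (τ.map l x : ℕ) = d.a + 1)
  · obtain ⟨hlk, hx⟩ := hx
    have hy : (τ.map l y : ℕ) = d.a ∨ (τ.map l y : ℕ) = d.a + 1 := by
      rw [d.appVal_of_eq hlk, d.appVal_of_eq hlk, merge_eq_merge_iff] at heq
      exact heq.elim (fun h => h ▸ hx) And.right
    rw [d.tie_of_mem hlk hx, d.tie_of_mem hlk hy]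
    exact (hsh hlk ⟨x, hx⟩ ⟨y, hy⟩).mpr hxy
  have hmap : τ.map l x = τ.map l y := by
    by_cases hlk : l + 1 = d.k
    · rw [d.appVal_of_eq hlk, d.appVal_of_eq hlk, merge_eq_merge_iff] at heq
      exact Fin.ext (heq.resolve_right fun h => hx ⟨hlk, h.1⟩)
    · exact d.appVal_injective_of_ne hlk heq
  have htie : ∀ z : Fin (τ.t l), τ.map l z = τ.map l x → d.tie l z = z := fun z hz => by
    by_cases hlk : l + 1 = d.k
    · exact d.tie_of_not_mem (hz ▸ fun h => hx ⟨hlk, h⟩)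
    · exact d.tie_of_ne hlk z
  rw [htie x rfl, htie y hmap.symm]
  by_contra hyx
  have := u.fiberMono l y x hmap.symm (le_of_lt (not_le.mp hyx))
  exact (not_le.mp hyx).ne' (Fin.ext_iff.mp (hinj (le_antisymm hxy this)))

theorem app_val_eq_appVal (u : τ ⟶ σ) (d : MergeData τ)
    (hbij : ∀ l < d.k, Function.Bijective (u.app l))
    (hk : ∀ x, (u.app d.k x : ℕ) = d.appVal d.k x)
    (hsh : ∀ j (hj : j + 1 = d.k) x y, d.sh j hj x ≤ d.sh j hj y ↔ u.app j x.1 ≤ u.app j y.1)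
    (l : ℕ) (hl : l ≤ d.k) (x : Fin (τ.t l)) : (u.app l x : ℕ) = d.appVal l x := by
  rcases Nat.lt_or_eq_of_le hl with hl | rfl
  · have hsucc := u.app_val_eq_appVal d hbij hk hsh (l + 1) hl
    rw [d.appVal_of_lt hl]
    exact val_eq_rank (hbij l hl) (le_iff_le_of_le_imp_le (d.key_injective l)
      fun x y => u.key_le_key_of_app_le d (hbij l hl).injective hsucc (hsh l)) x
  · exact hk x
termination_by d.k - l

theorem exists_mergeData (u : τ ⟶ σ) (hu : homDeg u = 1) :
    ∃ d : MergeData τ, ∀ l x, (u.app l x : ℕ) = d.appVal l x := by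
  obtain ⟨k, hkn, hk, hne⟩ := exists_level_of_homDeg_eq_one u hu
  have hid : ∀ l, k < l → ∀ x, (u.app l x : ℕ) = x :=
    u.app_val_eq_of_lt fun i hi => hne i hi.ne'
  have hbij : ∀ l < k, Function.Bijective (u.app l) := fun l hl => u.bijective_app (hne l hl.ne)
  obtain ⟨a, ha, hmerge⟩ := exists_merge_of_monotone_surjective (u.app k)
    (u.monotone_app (hid (k + 1) k.lt_succ_self)) (u.surj k) hk
  have hfib : τ.map k ⟨a, by omega⟩ = τ.map k ⟨a + 1, ha⟩ :=
    u.map_eq_of_app_eq (hid (k + 1) k.lt_succ_self) (Fin.ext (by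
      rw [hmerge, hmerge, merge_eq_merge_iff]
      simp))
  let sh : ∀ j, j + 1 = k →
      ({x : Fin (τ.t j) // (τ.map j x : ℕ) = a ∨ (τ.map j x : ℕ) = a + 1} →
        Fin (Fintype.card
          {x : Fin (τ.t j) // (τ.map j x : ℕ) = a ∨ (τ.map j x : ℕ) = a + 1})) :=
    fun j _ z => ⟨rank (fun z => u.app j z.1) z, rank_lt_card _ z⟩
  have hsh : ∀ j (hj : j + 1 = k) z z', sh j hj z ≤ sh j hj z' ↔ u.app j z.1 ≤ u.app j z'.1 :=
    fun j _ z z' => rank_le_rank_iff _ z z'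
  have hshBij : ∀ j (hj : j + 1 = k), Function.Bijective (sh j hj) := fun j hj =>
    (Fintype.bijective_iff_injective_and_card _).mpr ⟨fun z z' h =>
      rank_injective ((hbij j (by omega)).injective.comp Subtype.val_injective)
        (Fin.ext_iff.mp h), by simp⟩
  let d : MergeData τ := ⟨k, hkn, a, ha, hfib, sh, hshBij,
    fun j hj z z' hmap hzz' => (hsh j hj z z').mpr (u.fiberMono j _ _ hmap hzz')⟩
  refine ⟨d, fun l x => ?_⟩
  rcases le_or_gt l k with hl | hl
  · exact u.app_val_eq_appVal d hbij (fun x => (hmerge x).trans (d.appVal_of_eq rfl x).symm)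
      hsh l hl x
  · exact (hid l hl x).trans (d.appVal_of_gt hl x).symm

end PTreeHom

theorem stmt_2_general (n : ℕ) (τ : PTree n) :
    ∃ e : (Σ σ : PTree n, {u : τ ⟶ σ // homDeg u = 1}) ≃ MergeData τ,
      ∀ (σ : PTree n) (u : τ ⟶ σ) (hu : homDeg u = 1),
        -- the merged pair at level `k`, and the merge map `d_a` at level `k`:
        (∀ x : Fin (τ.t (e ⟨σ, ⟨u, hu⟩⟩).k),
          (PTreeHom.app u (e ⟨σ, ⟨u, hu⟩⟩).k x : ℕ) =
            if (x : ℕ) ≤ (e ⟨σ, ⟨u, hu⟩⟩).a then (x : ℕ) else (x : ℕ) - 1) ∧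
        -- identity on all levels above `k`:
        (∀ i, (e ⟨σ, ⟨u, hu⟩⟩).k < i → ∀ x : Fin (τ.t i),
          (PTreeHom.app u i x : ℕ) = (x : ℕ)) ∧
        -- on the level below `k`, the morphism rearranges the two fibers
        -- according to the shuffle of the datum:
        (∀ j (hj : j + 1 = (e ⟨σ, ⟨u, hu⟩⟩).k)
           (x y : {x : Fin (τ.t j) //
              (τ.map j x : ℕ) = (e ⟨σ, ⟨u, hu⟩⟩).a ∨
              (τ.map j x : ℕ) = (e ⟨σ, ⟨u, hu⟩⟩).a + 1}),
          ((e ⟨σ, ⟨u, hu⟩⟩).sh j hj x ≤ (e ⟨σ, ⟨u, hu⟩⟩).sh j hj y ↔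
            PTreeHom.app u j x.val ≤ PTreeHom.app u j y.val)) := by
  choose D hD using fun p : DegreeOneHom τ => p.2.1.exists_mergeData p.2.2
  have hbij : Function.Bijective D := by
    refine ⟨fun p q h => DegreeOneHom.ext fun l x => ?_, fun d => ?_⟩
    · rw [hD, hD, h]
    · obtain ⟨p, hp⟩ := d.exists_degreeOneHom
      exact ⟨p, MergeData.ext_of_appVal fun l x => by rw [← hD, hp]⟩
  refine ⟨Equiv.ofBijective D hbij, fun σ u hu => ?_⟩
  have h := hD ⟨σ, u, hu⟩
  refine ⟨fun x => (h _ x).trans ((D _).appVal_of_eq rfl x), fun i hi x =>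
    (h i x).trans ((D _).appVal_of_gt hi x), fun j hj x y => ?_⟩
  exact ((D _).sh_le_sh_iff hj x y).trans (by rw [← h, ← h]; rfl)

/-- degree-1 morphisms with source `τ` are in bijection with the
merge data above; the morphism associated to a datum merges the vertices
`a, a+1` at level `k`, shuffles the subtrees above them according to the given
shuffle, and is the identity on all levels `> k`; its target is uniquely
determined by the datum (this is part of the bijectivity of `e`). -/
theorem stmt_2 (n : ℕ) (hn : 1 ≤ n) (τ : PTree n) :
    ∃ e : (Σ σ : PTree n, {u : τ ⟶ σ // homDeg u = 1}) ≃ MergeData τ,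
      ∀ (σ : PTree n) (u : τ ⟶ σ) (hu : homDeg u = 1),
        -- the merged pair at level `k`, and the merge map `d_a` at level `k`:
        (∀ x : Fin (τ.t (e ⟨σ, ⟨u, hu⟩⟩).k),
          (PTreeHom.app u (e ⟨σ, ⟨u, hu⟩⟩).k x : ℕ) =
            if (x : ℕ) ≤ (e ⟨σ, ⟨u, hu⟩⟩).a then (x : ℕ) else (x : ℕ) - 1) ∧
        -- identity on all levels above `k`:
        (∀ i, (e ⟨σ, ⟨u, hu⟩⟩).k < i → ∀ x : Fin (τ.t i),
          (PTreeHom.app u i x : ℕ) = (x : ℕ)) ∧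
        -- on the level below `k`, the morphism rearranges the two fibers
        -- according to the shuffle of the datum:
        (∀ j (hj : j + 1 = (e ⟨σ, ⟨u, hu⟩⟩).k)
           (x y : {x : Fin (τ.t j) //
              (τ.map j x : ℕ) = (e ⟨σ, ⟨u, hu⟩⟩).a ∨
              (τ.map j x : ℕ) = (e ⟨σ, ⟨u, hu⟩⟩).a + 1}),
          ((e ⟨σ, ⟨u, hu⟩⟩).sh j hj x ≤ (e ⟨σ, ⟨u, hu⟩⟩).sh j hj y ↔
            PTreeHom.app u j x.val ≤ PTreeHom.app u j y.val)) :=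
  stmt_2_general n τ
end

section
/- Every morphism u of Ω_n^epi of degree d ≥ 1 admits a factorization as a composite of d morphisms of degree 1; moreover every factorization of u into degree-1 morphisms has exactly deg(u) factors. -/
/-!
If `deg u ≥ 1`, let `i` be the highest level on which `u` is not injective. As `u` is injective
on level `i + 1`, two vertices of level `i` identified by `u` are siblings, and by fiberwise
monotonicity so are two adjacent ones `x < x + 1`. Merging them gives a tree `θ` of degree
`deg τ - 1` through which `u` factors. Below level `i` the vertices of `θ` are those of `τ`,
reordered lexicographically by (image of the parent in `θ`, image under `u`, position in `τ`):
this is what makes the structure maps of `θ` monotone and both factors fiberwise monotone.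
Induction on the degree gives the factorization; since degrees add under composition, a
factorization into degree-one morphisms has `deg u` factors.
-/

open CategoryTheory

/-- Composable chains of morphisms `τ = τ_d → τ_{d-1} → ⋯ → τ_0 = σ` in
`Ω_n^epi` (the `cons` operation adds a morphism at the `σ` side, i.e. the
head of a chain is the morphism `u_1` closest to the target `σ`). -/
inductive Chain {n : ℕ} : PTree n → PTree n → Type
  | nil {τ : PTree n} : Chain τ τ
  | cons {τ θ σ : PTree n} (v : θ ⟶ σ) (c : Chain τ θ) : Chain τ σ

namespace Chain

/-- The composite of a chain. -/
def comp {n : ℕ} : ∀ {τ σ : PTree n}, Chain τ σ → (τ ⟶ σ)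
  | _, _, nil => 𝟙 _
  | _, _, cons v c => c.comp ≫ v

/-- The number of morphisms in a chain. -/
def length {n : ℕ} : ∀ {τ σ : PTree n}, Chain τ σ → ℕ
  | _, _, nil => 0
  | _, _, cons _ c => c.length + 1

/-- All morphisms in the chain are non-identities. -/
def NonId {n : ℕ} : ∀ {τ σ : PTree n}, Chain τ σ → Prop
  | _, _, nil => True
  | _, _, cons v c => ¬ IsIdentityHom v ∧ c.NonId

/-- All morphisms in the chain have degree 1. -/
def AllOne {n : ℕ} : ∀ {τ σ : PTree n}, Chain τ σ → Prop
  | _, _, nil => True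
  | _, _, cons v c => homDeg v = 1 ∧ c.AllOne

end Chain

variable {n : ℕ}

theorem Tuple.sort_symm_le_sort_symm_iff {m : ℕ} {α : Type*} [LinearOrder α] {f : Fin m → α}
    (hf : Function.Injective f) {a b : Fin m} :
    (Tuple.sort f).symm a ≤ (Tuple.sort f).symm b ↔ f a ≤ f b := by
  have hs : StrictMono (f ∘ Tuple.sort f) :=
    (Tuple.monotone_sort f).strictMono_of_injective (hf.comp (Tuple.sort f).injective)
  rw [← hs.le_iff_le]
  simp only [Function.comp_apply, Equiv.apply_symm_apply]

theorem homDeg_comp {τ θ σ : PTree n} (f : τ ⟶ θ) (g : θ ⟶ σ) :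
    homDeg (f ≫ g) = homDeg f + homDeg g := by
  unfold homDeg
  ring

theorem app_injective_of_le {τ σ : PTree n} (u : τ ⟶ σ) {j : ℕ} (hj : n ≤ j) :
    Function.Injective (u.app j) := fun a b _ =>
  Fin.ext (by have := a.isLt; have := b.isLt; have := τ.top j hj; omega)

theorem exists_not_injective_app {τ σ : PTree n} (u : τ ⟶ σ) (hu : 1 ≤ homDeg u) :
    ∃ j < n, ¬ Function.Injective (u.app j) := by
  by_contra! h
  have : τ.deg ≤ σ.deg := Finset.sum_le_sum fun j hj => by
    simpa using Fintype.card_le_of_injective _ (h j (Finset.mem_range.1 hj))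
  unfold homDeg at hu
  omega

theorem exists_not_injective_app_injective_app_succ {τ σ : PTree n} (u : τ ⟶ σ)
    (hu : 1 ≤ homDeg u) :
    ∃ i, ¬ Function.Injective (u.app i) ∧ Function.Injective (u.app (i + 1)) := by
  classical
  obtain ⟨j, hjn, hj⟩ := exists_not_injective_app u hu
  refine ⟨Nat.findGreatest (fun i => ¬ Function.Injective (u.app i)) n,
    Nat.findGreatest_spec (P := fun i => ¬ Function.Injective (u.app i)) hjn.le hj, ?_⟩
  by_cases hle : Nat.findGreatest (fun i => ¬ Function.Injective (u.app i)) n + 1 ≤ n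
  · exact not_not.1 (Nat.findGreatest_is_greatest (Nat.lt_succ_self _) hle)
  · exact app_injective_of_le u (by omega)

structure MergeablePair {τ σ : PTree n} (u : τ ⟶ σ) where
  level : ℕ
  pos : ℕ
  succ_lt : pos + 1 < τ.t level
  level_lt : level < n
  map_eq : τ.map level ⟨pos, by omega⟩ = τ.map level ⟨pos + 1, succ_lt⟩
  app_eq : u.app level ⟨pos, by omega⟩ = u.app level ⟨pos + 1, succ_lt⟩

theorem nonempty_mergeablePair {τ σ : PTree n} (u : τ ⟶ σ) (hu : 1 ≤ homDeg u) :
    Nonempty (MergeablePair u) := by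
  obtain ⟨i, hi, hi'⟩ := exists_not_injective_app_injective_app_succ u hu
  obtain ⟨a, b, hab, hlt⟩ : ∃ a b : Fin (τ.t i), u.app i a = u.app i b ∧ a < b := by
    obtain ⟨a, b, hab, hne⟩ := Function.not_injective_iff.1 hi
    rcases hne.lt_or_gt with h | h
    exacts [⟨a, b, hab, h⟩, ⟨b, a, hab.symm, h⟩]
  have hsucc : (a : ℕ) + 1 < τ.t i := by have := b.isLt; omega
  set a' : Fin (τ.t i) := ⟨a + 1, hsucc⟩
  have haa' : a ≤ a' := Fin.le_def.2 (Nat.le_succ _)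
  have ha'b : a' ≤ b := Fin.le_def.2 hlt
  have hsib : τ.map i a = τ.map i b := hi' (by rw [u.comm, u.comm, hab])
  have hmap : τ.map i a = τ.map i a' :=
    le_antisymm (τ.mono i haa') (hsib ▸ τ.mono i ha'b)
  have happ : u.app i a = u.app i a' :=
    le_antisymm (u.fiberMono i a a' hmap haa')
      (hab ▸ u.fiberMono i a' b (hmap.symm.trans hsib) ha'b)
  have hlevel : i < n := by
    by_contra h
    have := τ.top i (by omega)
    omega
  exact ⟨⟨i, a, hsucc, hlevel, hmap, happ⟩⟩

namespace MergeablePair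

variable {τ σ : PTree n} {u : τ ⟶ σ} (d : MergeablePair u)

/-- The level sizes of the tree in which the vertices `pos` and `pos + 1` of level `level` are
merged. -/
def t (j : ℕ) : ℕ := if j = d.level then τ.t j - 1 else τ.t j

theorem t_of_ne {j : ℕ} (h : j ≠ d.level) : d.t j = τ.t j := if_neg h

theorem t_level : d.t d.level = τ.t d.level - 1 := if_pos rfl

theorem val_lt_of_ne {j : ℕ} (h : j ≠ d.level) (z : Fin (d.t j)) : (z : ℕ) < τ.t j :=
  z.isLt.trans_eq (d.t_of_ne h)

theorem val_succ_lt (z : Fin (d.t d.level)) : (z : ℕ) + 1 < τ.t d.level := by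
  have := z.isLt.trans_eq d.t_level
  omega

def merge (j : ℕ) (z : Fin (τ.t j)) : Fin (d.t j) :=
  ⟨if j = d.level ∧ d.pos < z then z - 1 else z, by
    by_cases hj : j = d.level
    · subst hj
      have := z.isLt
      have := d.succ_lt
      rw [d.t_level]
      split_ifs <;> omega
    · rw [d.t_of_ne hj, if_neg fun h => hj h.1]
      exact z.isLt⟩

def unmerge (j : ℕ) (z : Fin (d.t j)) : Fin (τ.t j) :=
  ⟨if j = d.level ∧ d.pos < z then z + 1 else z, by
    by_cases hj : j = d.level
    · subst hj
      have := d.val_succ_lt z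
      split_ifs <;> omega
    · rw [if_neg fun h => hj h.1]
      exact d.val_lt_of_ne hj z⟩

theorem merge_unmerge (j : ℕ) (z : Fin (d.t j)) : d.merge j (d.unmerge j z) = z := by
  ext
  simp only [merge, unmerge]
  split_ifs <;> omega

theorem merge_mono (j : ℕ) : Monotone (d.merge j) := by
  intro a b hab
  simp only [Fin.le_def, merge] at hab ⊢
  split_ifs <;> omega

theorem unmerge_mono (j : ℕ) : Monotone (d.unmerge j) := by
  intro a b hab
  simp only [Fin.le_def, unmerge] at hab ⊢
  split_ifs <;> omega

theorem merge_injective {j : ℕ} (h : j ≠ d.level) : Function.Injective (d.merge j) := by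
  intro a b hab
  simpa [merge, h, Fin.ext_iff] using hab

def lo : Fin (τ.t d.level) := ⟨d.pos, by have := d.succ_lt; omega⟩

def hi : Fin (τ.t d.level) := ⟨d.pos + 1, d.succ_lt⟩

/-- `unmerge ∘ merge` only moves `hi` (to `lo`). -/
theorem apply_unmerge_merge {γ : ℕ → Type*} (f : ∀ j, Fin (τ.t j) → γ j)
    (hf : f d.level d.lo = f d.level d.hi) (j : ℕ) (z : Fin (τ.t j)) :
    f j (d.unmerge j (d.merge j z)) = f j z := by
  by_cases h : j = d.level ∧ (z : ℕ) = d.pos + 1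
  · obtain ⟨rfl, hz⟩ := h
    have hlo : d.unmerge _ (d.merge _ z) = d.lo := by ext; simp [merge, unmerge, lo, hz]
    have hhi : z = d.hi := Fin.ext hz
    rw [hlo, hf, hhi]
  · congr 1
    ext
    simp only [merge, unmerge]
    split_ifs <;> omega

/-- The components of the degree-one morphism onto the merged tree; below `level` they are the
bijections that sort each level by `sortKey`. -/
def proj (j : ℕ) : Fin (τ.t j) → Fin (d.t j) :=
  if h : j < d.level then fun z => Fin.cast (d.t_of_ne h.ne).symm
    ((Tuple.sort fun z' => toLex (proj (j + 1) (τ.map j z'), toLex (u.app j z', z'))).symm z)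
  else d.merge j
termination_by d.level - j

def sortKey (j : ℕ) (z : Fin (τ.t j)) : Fin (d.t (j + 1)) ×ₗ (Fin (σ.t j) ×ₗ Fin (τ.t j)) :=
  toLex (d.proj (j + 1) (τ.map j z), toLex (u.app j z, z))

theorem sortKey_injective (j : ℕ) : Function.Injective (d.sortKey j) :=
  fun _ _ h => congrArg (fun p => (ofLex (ofLex p).2).2) h

theorem proj_of_lt {j : ℕ} (h : j < d.level) (z : Fin (τ.t j)) :
    d.proj j z = Fin.cast (d.t_of_ne h.ne).symm ((Tuple.sort (d.sortKey j)).symm z) := by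
  rw [proj, dif_pos h]
  rfl

theorem proj_of_not_lt {j : ℕ} (h : ¬ j < d.level) : d.proj j = d.merge j := by
  rw [proj, dif_neg h]

def sect (j : ℕ) : Fin (d.t j) → Fin (τ.t j) :=
  if h : j < d.level then fun z => Tuple.sort (d.sortKey j) (Fin.cast (d.t_of_ne h.ne) z)
  else d.unmerge j

theorem sect_of_lt {j : ℕ} (h : j < d.level) (z : Fin (d.t j)) :
    d.sect j z = Tuple.sort (d.sortKey j) (Fin.cast (d.t_of_ne h.ne) z) := by
  rw [sect, dif_pos h]

theorem sect_of_not_lt {j : ℕ} (h : ¬ j < d.level) : d.sect j = d.unmerge j := by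
  rw [sect, dif_neg h]

theorem proj_sect (j : ℕ) (z : Fin (d.t j)) : d.proj j (d.sect j z) = z := by
  by_cases h : j < d.level
  · simp [proj_of_lt _ h, sect_of_lt _ h]
  · rw [proj_of_not_lt _ h, sect_of_not_lt _ h, merge_unmerge]

theorem apply_sect_proj {γ : ℕ → Type*} (f : ∀ j, Fin (τ.t j) → γ j)
    (hf : f d.level d.lo = f d.level d.hi) (j : ℕ) (z : Fin (τ.t j)) :
    f j (d.sect j (d.proj j z)) = f j z := by
  by_cases h : j < d.level
  · simp [proj_of_lt _ h, sect_of_lt _ h]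
  · rw [proj_of_not_lt _ h, sect_of_not_lt _ h, d.apply_unmerge_merge f hf]

theorem map_sect_proj (j : ℕ) (z : Fin (τ.t j)) : τ.map j (d.sect j (d.proj j z)) = τ.map j z :=
  d.apply_sect_proj τ.map d.map_eq j z

theorem app_sect_proj (j : ℕ) (z : Fin (τ.t j)) : u.app j (d.sect j (d.proj j z)) = u.app j z :=
  d.apply_sect_proj u.app d.app_eq j z

theorem sortKey_sect_mono {j : ℕ} (h : j < d.level) : Monotone (d.sortKey j ∘ d.sect j) := by
  intro a b hab
  simp only [Function.comp_apply, sect_of_lt _ h]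
  exact Tuple.monotone_sort (d.sortKey j) (Fin.cast_le_cast _ |>.2 hab)

theorem proj_le_proj_iff {j : ℕ} (h : j < d.level) {a b : Fin (τ.t j)} :
    d.proj j a ≤ d.proj j b ↔ d.sortKey j a ≤ d.sortKey j b := by
  rw [proj_of_lt _ h, proj_of_lt _ h, Fin.cast_le_cast,
    Tuple.sort_symm_le_sort_symm_iff (d.sortKey_injective j)]

def merged : PTree n where
  t := d.t
  map j z := d.proj (j + 1) (τ.map j (d.sect j z))
  mono j a b hab := by
    by_cases h : j < d.level
    · exact (Prod.Lex.toLex_le_toLex'.1 (d.sortKey_sect_mono h hab)).1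
    · rw [d.sect_of_not_lt h, d.proj_of_not_lt (by omega)]
      exact d.merge_mono _ (τ.mono j (d.unmerge_mono j hab))
  surjmap j b := by
    obtain ⟨a, ha⟩ := τ.surjmap j (d.sect (j + 1) b)
    exact ⟨d.proj j a, by simp only [map_sect_proj, ha, proj_sect]⟩
  top j hj := (d.t_of_ne (by have := d.level_lt; omega)).trans (τ.top j hj)

def projHom : τ ⟶ d.merged where
  app := d.proj
  surj j b := ⟨d.sect j b, d.proj_sect j b⟩
  comm j z := congrArg (d.proj (j + 1)) (d.map_sect_proj j z).symm
  fiberMono j a b hab hle := by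
    by_cases h : j < d.level
    · refine (d.proj_le_proj_iff h).2 ?_
      exact Prod.Lex.toLex_le_toLex'.2 ⟨(congrArg _ hab).le,
        fun _ => Prod.Lex.toLex_le_toLex'.2 ⟨u.fiberMono j a b hab hle, fun _ => hle⟩⟩
    · rw [d.proj_of_not_lt h]
      exact d.merge_mono j hle

def factorHom : d.merged ⟶ σ where
  app j z := u.app j (d.sect j z)
  surj j b := by
    obtain ⟨a, rfl⟩ := u.surj j b
    exact ⟨d.proj j a, d.app_sect_proj j a⟩
  comm j z := (d.app_sect_proj (j + 1) _).trans (u.comm j _)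
  fiberMono j a b hab hle := by
    by_cases h : j < d.level
    · have hkey := Prod.Lex.toLex_le_toLex'.1 (d.sortKey_sect_mono h hle)
      exact (Prod.Lex.toLex_le_toLex'.1 (hkey.2 hab)).1
    · have hsib : τ.map j (d.sect j a) = τ.map j (d.sect j b) := by
        have hab' : d.proj (j + 1) (τ.map j (d.sect j a)) =
            d.proj (j + 1) (τ.map j (d.sect j b)) := hab
        rw [d.proj_of_not_lt (by omega)] at hab'
        exact d.merge_injective (by omega) hab'
      rw [d.sect_of_not_lt h] at hsib ⊢
      exact u.fiberMono j _ _ hsib (d.unmerge_mono j hle)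

theorem projHom_comp_factorHom : d.projHom ≫ d.factorHom = u :=
  PTreeHom.ext' (funext₂ d.app_sect_proj)

theorem deg_merged_add_one : d.merged.deg + 1 = τ.deg := by
  have hlevel : ∀ j, d.t j + (if j = d.level then 1 else 0) = τ.t j := fun j => by
    by_cases h : j = d.level
    · subst h
      have := d.succ_lt
      rw [d.t_level, if_pos rfl]
      omega
    · rw [d.t_of_ne h, if_neg h, add_zero]
  rw [PTree.deg, PTree.deg, ← Finset.sum_congr rfl fun j _ => hlevel j, Finset.sum_add_distrib,
    Finset.sum_ite_eq', if_pos (Finset.mem_range.2 d.level_lt)]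
  rfl

theorem homDeg_projHom : homDeg d.projHom = 1 := by
  rw [homDeg, ← d.deg_merged_add_one]
  push_cast
  ring

end MergeablePair

theorem exists_comp_eq_homDeg_eq_one {τ σ : PTree n} (u : τ ⟶ σ) (hu : 1 ≤ homDeg u) :
    ∃ (θ : PTree n) (w : τ ⟶ θ) (v : θ ⟶ σ), homDeg w = 1 ∧ w ≫ v = u := by
  obtain ⟨d⟩ := nonempty_mergeablePair u hu
  exact ⟨d.merged, d.projHom, d.factorHom, d.homDeg_projHom, d.projHom_comp_factorHom⟩

namespace Chain

def snoc : ∀ {τ θ σ : PTree n}, Chain θ σ → (τ ⟶ θ) → Chain τ σ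
  | _, _, _, nil, w => cons w nil
  | _, _, _, cons v c, w => cons v (c.snoc w)

theorem comp_snoc : ∀ {τ θ σ : PTree n} (c : Chain θ σ) (w : τ ⟶ θ),
    (c.snoc w).comp = w ≫ c.comp
  | _, _, _, nil, w => by simp [snoc, comp]
  | _, _, _, cons v c, w => by simp only [snoc, comp, comp_snoc c w, Category.assoc]

theorem allOne_snoc : ∀ {τ θ σ : PTree n} (c : Chain θ σ) {w : τ ⟶ θ},
    c.AllOne → homDeg w = 1 → (c.snoc w).AllOne
  | _, _, _, nil, _, _, hw => by simpa only [snoc, AllOne, and_true] using hw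
  | _, _, _, cons _ c, _, hc, hw => by
    simp only [snoc, AllOne] at hc ⊢
    exact ⟨hc.1, c.allOne_snoc hc.2 hw⟩

theorem length_eq_homDeg_comp : ∀ {τ σ : PTree n} (c : Chain τ σ),
    c.AllOne → (c.length : ℤ) = homDeg c.comp
  | _, _, nil, _ => by simp [length, homDeg]
  | _, _, cons v c, hc => by
    simp only [AllOne] at hc
    obtain ⟨hv, hc⟩ := hc
    rw [length, comp, homDeg_comp, hv, ← c.length_eq_homDeg_comp hc]
    push_cast
    rfl

end Chain

theorem exists_allOne_chain_comp_eq {τ σ : PTree n} (u : τ ⟶ σ) (hu : 1 ≤ homDeg u) :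
    ∃ c : Chain τ σ, c.AllOne ∧ c.comp = u := by
  obtain ⟨k, hk⟩ : ∃ k : ℕ, homDeg u = k + 1 := ⟨(homDeg u - 1).toNat, by omega⟩
  induction k generalizing τ σ with
  | zero => exact ⟨.cons u .nil, by simpa [Chain.AllOne] using hk, by simp [Chain.comp]⟩
  | succ k ih =>
    obtain ⟨θ, w, v, hw, rfl⟩ := exists_comp_eq_homDeg_eq_one u hu
    have hv : homDeg v = k + 1 := by
      rw [homDeg_comp, hw] at hk
      push_cast at hk
      omega
    obtain ⟨c, hc, rfl⟩ := ih v (by omega) hv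
    exact ⟨c.snoc w, c.allOne_snoc hc hw, c.comp_snoc w⟩

theorem stmt_3_general (n : ℕ) (τ σ : PTree n) (u : τ ⟶ σ) :
    ((1 ≤ homDeg u) →
      ∃ c : Chain τ σ, c.AllOne ∧ c.comp = u ∧ (c.length : ℤ) = homDeg u) ∧
    (∀ c : Chain τ σ, c.AllOne → c.comp = u → (c.length : ℤ) = homDeg u) := by
  refine ⟨fun hu => ?_, fun c hc hcu => hcu ▸ c.length_eq_homDeg_comp hc⟩
  obtain ⟨c, hc, rfl⟩ := exists_allOne_chain_comp_eq u hu
  exact ⟨c, hc, rfl, c.length_eq_homDeg_comp hc⟩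

/-- Every morphism of `Ω_n^epi` of degree `d ≥ 1` factors as a
composite of `d` morphisms of degree 1, and every factorization into degree-1
morphisms has exactly `deg u` factors. -/
theorem stmt_3 (n : ℕ) (hn : 1 ≤ n) (τ σ : PTree n) (u : τ ⟶ σ) :
    ((1 ≤ homDeg u) →
      ∃ c : Chain τ σ, c.AllOne ∧ c.comp = u ∧ (c.length : ℤ) = homDeg u) ∧
    (∀ c : Chain τ σ, c.AllOne → c.comp = u → (c.length : ℤ) = homDeg u) :=
  stmt_3_general n τ σ u
end
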